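/- Let n ≥ 1, let α ⊆ {1,…,n} with |α| ≥ 2, let π be a permutation of α, and let M := E(α) − B(α,π). Then for every real s ≥ cot(π/|α|) and every z ∈ ℂⁿ, one has z† ( s(M + Mᵀ) + i(M − Mᵀ) ) z ≥ 0, i.e. the Hermitian matrix s(M + Mᵀ) + i(M − Mᵀ) is positive semi-definite; in particular the asymmetry index of E(α) − B(α,π) is at most cot(π/|α|). -/
import Mathlib

open Matrix Complex ComplexOrder
open Finset

/-- The circuit matrix `B(α, π)`: entries `1` if `i, j ∈ α` and `j = π i`, else `0`. -/
def circuitMatrix (n : ℕ) (α : Finset (Fin n)) (e : Equiv.Perm (Fin n)) :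
    Matrix (Fin n) (Fin n) ℝ :=
  Matrix.of fun i j => if i ∈ α ∧ j ∈ α ∧ j = e i then 1 else 0

/-- The diagonal 0–1 matrix `E(α)` with `E_{ii} = 1` exactly for `i ∈ α`. -/
def diagE (n : ℕ) (α : Finset (Fin n)) : Matrix (Fin n) (Fin n) ℝ :=
  Matrix.of fun i j => if i = j ∧ i ∈ α then 1 else 0

/-- The Hermitian matrix `K_s(M) = s (M + Mᵀ) + i (M − Mᵀ)` associated with a
real square matrix `M` and a real parameter `s`. -/
noncomputable def Kmat {ι : Type*} [Fintype ι] (M : Matrix ι ι ℝ) (s : ℝ) :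
    Matrix ι ι ℂ :=
  (s : ℂ) • ((M + Mᵀ).map Complex.ofReal) + Complex.I • ((M - Mᵀ).map Complex.ofReal)

lemma ortho (k : ℕ) (hk : 0 < k) (a : ℤ) :
    (∑ t ∈ Finset.range k, Complex.exp (2 * Real.pi * I * a / k) ^ t)
      = if (k:ℤ) ∣ a then (k:ℂ) else 0 := by
  have hkne : (k:ℂ) ≠ 0 := by exact_mod_cast hk.ne'
  have h2 : (2 * (Real.pi:ℂ) * I : ℂ) ≠ 0 := by
    intro h
    simp [Real.pi_ne_zero, Complex.I_ne_zero, Complex.ofReal_eq_zero] at h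
  set c : ℂ := Complex.exp (2 * Real.pi * I * a / k) with hc
  have hck : c ^ k = 1 := by
    rw [hc, ← Complex.exp_nat_mul]
    have : (k:ℂ) * (2 * Real.pi * I * a / k) = a * (2 * Real.pi * I) := by
      field_simp
    rw [this]
    exact_mod_cast Complex.exp_int_mul_two_pi_mul_I a
  have hc1 : c = 1 ↔ (k:ℤ) ∣ a := by
    rw [hc, Complex.exp_eq_one_iff]
    constructor
    · rintro ⟨m, hm⟩
      have ha : (a : ℂ) = m * k := by
        field_simp at hm
        have hm' : 2 * (Real.pi:ℂ) * I * a = 2 * (Real.pi:ℂ) * I * (m * k) := by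
          rw [hm]; ring
        exact mul_left_cancel₀ h2 hm'
      exact ⟨m, by exact_mod_cast ha.trans (mul_comm _ _)⟩
    · rintro ⟨m, hm⟩
      refine ⟨m, ?_⟩
      rw [hm]
      push_cast
      field_simp
  by_cases h : (k:ℤ) ∣ a
  · simp [h, hc1.mpr h, Finset.sum_const]
  · rw [if_neg h]
    have hcne : c ≠ 1 := fun hh => h (hc1.mp hh)
    rw [geom_sum_eq hcne, hck]
    simp

section cyclic
variable (k : ℕ)

noncomputable def Efun (k : ℕ) (a : ℤ) : ℂ := Complex.exp (2 * Real.pi * I * a / k)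

lemma Efun_add (a b : ℤ) : Efun k a * Efun k b = Efun k (a + b) := by
  unfold Efun
  rw [← Complex.exp_add]
  congr 1
  push_cast
  ring

lemma Efun_conj (a : ℤ) : (starRingEnd ℂ) (Efun k a) = Efun k (-a) := by
  unfold Efun
  rw [← Complex.exp_conj]
  congr 1
  simp [_root_.map_div₀, _root_.map_mul, Complex.conj_I, Complex.conj_ofReal, _root_.map_ofNat]

lemma dvd_iff0 (hk : 0 < k) {j l : ℕ} (hj : j < k) (hl : l < k) :
    (k:ℤ) ∣ ((l:ℤ) - j) ↔ l = j := by
  have hj' : (j:ℤ) < k := by exact_mod_cast hj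
  have hl' : (l:ℤ) < k := by exact_mod_cast hl
  have hk' : (0:ℤ) < k := by exact_mod_cast hk
  constructor
  · rintro ⟨c, hc⟩
    have h0 : (0:ℤ) ≤ l := Int.natCast_nonneg l
    have h1 : (0:ℤ) ≤ j := Int.natCast_nonneg j
    have : c = 0 := by
      by_contra hcon
      have : c ≤ -1 ∨ 1 ≤ c := by omega
      rcases this with h | h
      · nlinarith
      · nlinarith
    subst this
    omega
  · rintro rfl
    exact ⟨0, by ring⟩

lemma dvd_iff1 (hk : 0 < k) {j l : ℕ} (hj : j < k) (hl : l < k) :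
    (k:ℤ) ∣ ((l:ℤ) - j - 1) ↔ l = (if j + 1 < k then j + 1 else 0) := by
  have hj' : (j:ℤ) < k := by exact_mod_cast hj
  have hl' : (l:ℤ) < k := by exact_mod_cast hl
  have hk' : (0:ℤ) < k := by exact_mod_cast hk
  have h0 : (0:ℤ) ≤ l := Int.natCast_nonneg l
  have h1 : (0:ℤ) ≤ j := Int.natCast_nonneg j
  constructor
  · rintro ⟨c, hc⟩
    have : c = 0 ∨ c = -1 := by
      by_contra hcon
      push_neg at hcon
      have : c ≤ -2 ∨ 1 ≤ c := by omega
      rcases this with h | h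
      · nlinarith
      · nlinarith
    split_ifs with hcase
    · have hck : (j:ℤ) + 1 < k := by exact_mod_cast hcase
      rcases this with rfl | rfl <;> omega
    · have hck : ¬ ((j:ℤ) + 1 < k) := fun hh => hcase (by exact_mod_cast hh)
      rcases this with rfl | rfl <;> omega
  · intro h
    split_ifs at h with hcase
    · subst h; exact ⟨0, by push_cast; ring⟩
    · subst h
      refine ⟨-1, ?_⟩
      have : j + 1 = k := by omega
      have : (j:ℤ) + 1 = k := by exact_mod_cast this
      omega

lemma cyclic_key (hk : 0 < k) (W : ℕ → ℂ) (hW : W k = W 0) (s : ℝ)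
    (H : ∀ t ∈ Finset.range k,
      0 ≤ s * (1 - Real.cos (2*Real.pi*t/k)) - Real.sin (2*Real.pi*t/k)) :
    0 ≤ ∑ j ∈ Finset.range k,
      ((↑s + I) * ((starRingEnd ℂ) (W j) * (W j - W (j+1)))).re := by
  classical
  set E := Efun k with hE
  set F : ℕ → ℂ := fun t => ∑ j ∈ Finset.range k, E j ^ t * W j with hF
  -- expansion of conj (F t) * F t
  have expand : ∀ t : ℕ, (starRingEnd ℂ) (F t) * F t
      = ∑ j ∈ Finset.range k, ∑ l ∈ Finset.range k,
          E ((l:ℤ) - j) ^ t * ((starRingEnd ℂ) (W j) * W l) := by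
    intro t
    rw [hF, _root_.map_sum, Finset.sum_mul_sum]
    refine Finset.sum_congr rfl fun j hj => Finset.sum_congr rfl fun l hl => ?_
    rw [_root_.map_mul, _root_.map_pow, hE, Efun_conj]
    have : Efun k (-(j:ℤ)) ^ t * Efun k l ^ t = Efun k ((l:ℤ) - j) ^ t := by
      rw [← mul_pow, Efun_add]
      congr 1
      ring
    calc Efun k (-(j:ℤ)) ^ t * (starRingEnd ℂ) (W j) * (Efun k (l:ℤ) ^ t * W l)
        = (Efun k (-(j:ℤ)) ^ t * Efun k (l:ℤ) ^ t) * ((starRingEnd ℂ) (W j) * W l) := by ring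
      _ = Efun k ((l:ℤ) - j) ^ t * ((starRingEnd ℂ) (W j) * W l) := by rw [this]
  -- T1
  have T1 : ∑ t ∈ Finset.range k, (starRingEnd ℂ) (F t) * F t
      = (k:ℂ) * ∑ j ∈ Finset.range k, (starRingEnd ℂ) (W j) * W j := by
    calc ∑ t ∈ Finset.range k, (starRingEnd ℂ) (F t) * F t
        = ∑ t ∈ Finset.range k, ∑ j ∈ Finset.range k, ∑ l ∈ Finset.range k,
            E ((l:ℤ) - j) ^ t * ((starRingEnd ℂ) (W j) * W l) :=
          Finset.sum_congr rfl fun t _ => expand t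
      _ = ∑ j ∈ Finset.range k, ∑ l ∈ Finset.range k,
            (∑ t ∈ Finset.range k, E ((l:ℤ) - j) ^ t) * ((starRingEnd ℂ) (W j) * W l) := by
          rw [Finset.sum_comm]
          refine Finset.sum_congr rfl fun j _ => ?_
          rw [Finset.sum_comm]
          refine Finset.sum_congr rfl fun l _ => ?_
          rw [Finset.sum_mul]
      _ = ∑ j ∈ Finset.range k, ∑ l ∈ Finset.range k,
            (if (k:ℤ) ∣ ((l:ℤ) - j) then (k:ℂ) else 0) * ((starRingEnd ℂ) (W j) * W l) := by
          refine Finset.sum_congr rfl fun j _ => Finset.sum_congr rfl fun l _ => ?_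
          rw [hE]; unfold Efun; rw [ortho k hk]
      _ = ∑ j ∈ Finset.range k, (k:ℂ) * ((starRingEnd ℂ) (W j) * W j) := by
          refine Finset.sum_congr rfl fun j hj => ?_
          rw [Finset.sum_eq_single j]
          · rw [if_pos ⟨0, by ring⟩]
          · intro l hl hne
            rw [if_neg, zero_mul]
            rw [dvd_iff0 k hk (Finset.mem_range.mp hj) (Finset.mem_range.mp hl)]
            exact hne
          · intro hj'; exact absurd hj hj'
      _ = (k:ℂ) * ∑ j ∈ Finset.range k, (starRingEnd ℂ) (W j) * W j := by
          rw [Finset.mul_sum]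
  -- T2
  have T2 : ∑ t ∈ Finset.range k, E (-1) ^ t * ((starRingEnd ℂ) (F t) * F t)
      = (k:ℂ) * ∑ j ∈ Finset.range k, (starRingEnd ℂ) (W j) * W (j+1) := by
    calc ∑ t ∈ Finset.range k, E (-1) ^ t * ((starRingEnd ℂ) (F t) * F t)
        = ∑ t ∈ Finset.range k, ∑ j ∈ Finset.range k, ∑ l ∈ Finset.range k,
            E ((l:ℤ) - j - 1) ^ t * ((starRingEnd ℂ) (W j) * W l) := by
          refine Finset.sum_congr rfl fun t _ => ?_
          rw [expand t, Finset.mul_sum]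
          refine Finset.sum_congr rfl fun j _ => ?_
          rw [Finset.mul_sum]
          refine Finset.sum_congr rfl fun l _ => ?_
          rw [← mul_assoc, ← mul_pow, hE, Efun_add]
          congr 3
          ring
      _ = ∑ j ∈ Finset.range k, ∑ l ∈ Finset.range k,
            (∑ t ∈ Finset.range k, E ((l:ℤ) - j - 1) ^ t) * ((starRingEnd ℂ) (W j) * W l) := by
          rw [Finset.sum_comm]
          refine Finset.sum_congr rfl fun j _ => ?_
          rw [Finset.sum_comm]
          refine Finset.sum_congr rfl fun l _ => ?_
          rw [Finset.sum_mul]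
      _ = ∑ j ∈ Finset.range k, ∑ l ∈ Finset.range k,
            (if (k:ℤ) ∣ ((l:ℤ) - j - 1) then (k:ℂ) else 0) * ((starRingEnd ℂ) (W j) * W l) := by
          refine Finset.sum_congr rfl fun j _ => Finset.sum_congr rfl fun l _ => ?_
          rw [hE]; unfold Efun; rw [ortho k hk]
      _ = ∑ j ∈ Finset.range k, (k:ℂ) * ((starRingEnd ℂ) (W j) * W (j+1)) := by
          refine Finset.sum_congr rfl fun j hj => ?_
          have hjk := Finset.mem_range.mp hj
          rw [Finset.sum_eq_single (if j + 1 < k then j + 1 else 0)]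
          · rw [if_pos]
            · split_ifs with hcase
              · rfl
              · have hjk1 : j + 1 = k := by omega
                rw [hjk1, hW]
            · rw [dvd_iff1 k hk hjk (by split_ifs <;> omega)]
          · intro l hl hne
            rw [if_neg, zero_mul]
            rw [dvd_iff1 k hk hjk (Finset.mem_range.mp hl)]
            exact hne
          · intro hcon
            exact absurd (Finset.mem_range.mpr (by split_ifs <;> omega)) hcon
      _ = (k:ℂ) * ∑ j ∈ Finset.range k, (starRingEnd ℂ) (W j) * W (j+1) := by
          rw [Finset.mul_sum]
  -- combine
  set A : ℂ := ∑ j ∈ Finset.range k, (starRingEnd ℂ) (W j) * W j with hA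
  set B : ℂ := ∑ j ∈ Finset.range k, (starRingEnd ℂ) (W j) * W (j+1) with hB
  have hsum : ∑ t ∈ Finset.range k, (1 - E (-1) ^ t) * ((starRingEnd ℂ) (F t) * F t)
      = (k:ℂ) * (A - B) := by
    simp only [sub_mul, one_mul, Finset.sum_sub_distrib]
    rw [T1, T2, mul_sub]
  have hgoal : ∑ j ∈ Finset.range k,
      ((↑s + I) * ((starRingEnd ℂ) (W j) * (W j - W (j+1)))).re
      = ((↑s + I) * (A - B)).re := by
    rw [← Complex.re_sum, ← Finset.mul_sum]
    congr 2
    rw [hA, hB, ← Finset.sum_sub_distrib]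
    refine Finset.sum_congr rfl fun j _ => ?_
    ring
  rw [hgoal]
  have hkR : (0:ℝ) < (k:ℝ) := by exact_mod_cast hk
  rw [← mul_nonneg_iff_of_pos_left (c := (k:ℝ)) hkR]
  have hre : (k:ℝ) * ((↑s + I) * (A - B)).re
      = (∑ t ∈ Finset.range k, (↑s + I) * ((1 - E (-1) ^ t) * ((starRingEnd ℂ) (F t) * F t))).re := by
    rw [← Finset.mul_sum, hsum]
    have : ((↑s:ℂ) + I) * ((k:ℂ) * (A - B)) = (((k:ℝ):ℂ)) * ((↑s + I) * (A - B)) := by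
      push_cast; ring
    rw [this, Complex.re_ofReal_mul]
  rw [hre, Complex.re_sum]
  refine Finset.sum_nonneg fun t ht => ?_
  -- per-term computation
  have hEt : E (-1) ^ t = ((Real.cos (2*Real.pi*t/k) : ℝ) : ℂ)
      - ((Real.sin (2*Real.pi*t/k) : ℝ) : ℂ) * I := by
    have h1 : E (-1) ^ t = Complex.exp (((-(2*Real.pi*t/k) : ℝ) : ℂ) * I) := by
      rw [hE]; unfold Efun
      rw [← Complex.exp_nat_mul]
      congr 1
      push_cast
      ring
    rw [h1, Complex.exp_mul_I, ← Complex.ofReal_cos, ← Complex.ofReal_sin,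
      Real.cos_neg, Real.sin_neg]
    push_cast
    ring
  have hterm : ((↑s + I) * ((1 - E (-1) ^ t) * ((starRingEnd ℂ) (F t) * F t))).re
      = (s * (1 - Real.cos (2*Real.pi*t/k)) - Real.sin (2*Real.pi*t/k)) * Complex.normSq (F t) := by
    rw [hEt, ← Complex.normSq_eq_conj_mul_self]
    simp only [Complex.mul_re, Complex.mul_im, Complex.sub_re, Complex.sub_im,
      Complex.add_re, Complex.add_im, Complex.one_re, Complex.one_im,
      Complex.I_re, Complex.I_im, Complex.ofReal_re, Complex.ofReal_im]
    ring
  rw [hterm]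
  exact mul_nonneg (H t ht) (Complex.normSq_nonneg _)


end cyclic

lemma cot_nonneg_aux (m : ℕ) (hm : 2 ≤ m) : 0 ≤ Real.cot (Real.pi / m) := by
  have hm0 : (0:ℝ) < m := by positivity
  have hp1 : 0 < Real.pi / m := by positivity
  have hp2 : Real.pi / m ≤ Real.pi / 2 := by
    apply div_le_div_of_nonneg_left Real.pi_pos.le (by norm_num)
    exact_mod_cast hm
  rw [Real.cot_eq_cos_div_sin]
  apply div_nonneg
  · exact Real.cos_nonneg_of_mem_Icc ⟨by linarith [Real.pi_div_two_pos], hp2⟩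
  · exact (Real.sin_pos_of_pos_of_lt_pi hp1 (by linarith [Real.pi_pos])).le

set_option maxHeartbeats 1000000 in
lemma trig_key (m k : ℕ) (hm : 2 ≤ m) (hk : 1 ≤ k) (hkm : k ≤ m) (s : ℝ)
    (hs : Real.cot (Real.pi / m) ≤ s) :
    ∀ t ∈ Finset.range k,
      0 ≤ s * (1 - Real.cos (2*Real.pi*t/k)) - Real.sin (2*Real.pi*t/k) := by
  intro t ht
  have htk := Finset.mem_range.mp ht
  have hs0 : 0 ≤ s := le_trans (cot_nonneg_aux m hm) hs
  rcases Nat.eq_zero_or_pos t with rfl | ht1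
  · simp
  have hk0 : (0:ℝ) < k := by exact_mod_cast hk
  have hm0 : (0:ℝ) < m := by positivity
  have ht0 : (1:ℝ) ≤ t := by exact_mod_cast ht1
  have htk' : (t:ℝ) ≤ (k:ℝ) - 1 := by
    have : (t:ℝ) + 1 ≤ k := by exact_mod_cast htk
    linarith
  set θ : ℝ := 2*Real.pi*t/k with hθ
  have hθ0 : 0 < θ := by
    apply div_pos _ hk0
    positivity
  have hθ2π : θ < 2*Real.pi := by
    rw [hθ, div_lt_iff₀ hk0]
    have := Real.pi_pos
    nlinarith
  rcases le_or_gt (Real.sin θ) 0 with hsin | hsin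
  · have h1 : Real.cos θ ≤ 1 := Real.cos_le_one θ
    nlinarith
  -- sin θ > 0 case
  have hθπ : θ < Real.pi := by
    by_contra hcon
    push_neg at hcon
    have h1 : 0 ≤ Real.sin (θ - Real.pi) :=
      Real.sin_nonneg_of_nonneg_of_le_pi (by linarith) (by linarith)
    rw [Real.sin_sub_pi] at h1
    linarith
  set h : ℝ := θ / 2 with hh
  have hh0 : 0 < h := by positivity
  have hh2 : h < Real.pi / 2 := by rw [hh]; linarith
  set p : ℝ := Real.pi / m with hp
  have hp0 : 0 < p := by positivity
  have hph : p ≤ h := by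
    rw [hp, hh, hθ]
    rw [div_le_div_iff₀ hm0 (by norm_num : (0:ℝ) < 2)]
    have hπ := Real.pi_pos
    have h1 : Real.pi * k ≤ Real.pi * m := by
      have : (k:ℝ) ≤ m := by exact_mod_cast hkm
      nlinarith
    rw [div_mul_eq_mul_div, le_div_iff₀ hk0]
    calc Real.pi * 2 * k = 2 * (Real.pi * k) := by ring
      _ ≤ 2 * (Real.pi * m) := by linarith
      _ ≤ 2 * Real.pi * t * m := by
          have h2 : 0 ≤ (2*Real.pi*m) * ((t:ℝ) - 1) := mul_nonneg (by positivity) (by linarith)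
          nlinarith [h2]
  have hsinh : 0 < Real.sin h := Real.sin_pos_of_pos_of_lt_pi hh0 (by linarith [Real.pi_pos])
  have hsinp : 0 < Real.sin p := Real.sin_pos_of_pos_of_lt_pi hp0 (by linarith [Real.pi_pos])
  have hs' : Real.cos p ≤ s * Real.sin p := by
    rw [Real.cot_eq_cos_div_sin, div_le_iff₀ hsinp] at hs
    linarith
  have hkey2 : Real.cos h * Real.sin p ≤ Real.cos p * Real.sin h := by
    have h1 : 0 ≤ Real.sin (h - p) := Real.sin_nonneg_of_nonneg_of_le_pi (by linarith)
      (by linarith [Real.pi_pos])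
    rw [Real.sin_sub] at h1
    linarith
  have hmain : Real.cos h ≤ s * Real.sin h := by
    have h4 : Real.cos p * Real.sin h ≤ s * Real.sin p * Real.sin h :=
      mul_le_mul_of_nonneg_right hs' hsinh.le
    have h5 : Real.sin p * Real.cos h ≤ Real.sin p * (s * Real.sin h) := by nlinarith [hkey2, h4]
    exact le_of_mul_le_mul_left h5 hsinp
  have hcosθ : Real.cos θ = 2 * Real.cos h ^ 2 - 1 := by
    rw [show θ = 2 * h by rw [hh]; ring, Real.cos_two_mul]
  have hsinθ : Real.sin θ = 2 * Real.sin h * Real.cos h := by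
    rw [show θ = 2 * h by rw [hh]; ring, Real.sin_two_mul]
  have hpyth : Real.sin h ^ 2 + Real.cos h ^ 2 = 1 := Real.sin_sq_add_cos_sq h
  have h2 : 0 ≤ 2 * Real.sin h * (s * Real.sin h - Real.cos h) :=
    mul_nonneg (by linarith) (by linarith)
  have h3 : s * (Real.sin h ^ 2 + Real.cos h ^ 2) = s * 1 := by rw [hpyth]
  rw [hcosθ, hsinθ]
  nlinarith [h2, h3]

lemma orbit_sum (n m : ℕ) (e : Equiv.Perm (Fin n)) (z : Fin n → ℂ) (s : ℝ) (hm : 2 ≤ m)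
    (hs : Real.cot (Real.pi / m) ≤ s) (β : Finset (Fin n)) (hcard : β.card ≤ m)
    (hinv : ∀ i, i ∈ β ↔ e i ∈ β) :
    0 ≤ ∑ i ∈ β, ((↑s + I) * ((starRingEnd ℂ) (z i) * (z i - z (e i)))).re := by
  classical
  induction β using Finset.strongInduction with
  | _ β IH =>
    rcases β.eq_empty_or_nonempty with rfl | ⟨x, hx⟩
    · simp
    set f : Fin n → Fin n := ⇑e with hf
    have hper : x ∈ Function.periodicPts f := by
      refine Function.mk_mem_periodicPts (n := orderOf e) (orderOf_pos e) ?_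
      unfold Function.IsPeriodicPt Function.IsFixedPt
      rw [← Equiv.Perm.coe_pow, pow_orderOf_eq_one]
      rfl
    set k := Function.minimalPeriod f x with hk
    have hk0 : 0 < k := Function.minimalPeriod_pos_of_mem_periodicPts hper
    set O : Finset (Fin n) := Finset.image (fun j => f^[j] x) (Finset.range k) with hO
    have hinj : Set.InjOn (fun j => f^[j] x) (Finset.range k) := by
      intro a ha b hb hab
      exact Function.iterate_injOn_Iio_minimalPeriod
        (by simpa using Finset.mem_coe.mp ha) (by simpa using Finset.mem_coe.mp hb) hab
    have hOcard : O.card = k := by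
      rw [hO, Finset.card_image_of_injOn hinj, Finset.card_range]
    have hOβ : O ⊆ β := by
      intro i hi
      rw [hO, Finset.mem_image] at hi
      obtain ⟨j, hj, rfl⟩ := hi
      clear hj
      induction j with
      | zero => exact hx
      | succ j ihj =>
        rw [Function.iterate_succ_apply']
        exact (hinv _).mp ihj
    have hmapsto : ∀ i ∈ O, f i ∈ O := by
      intro i hi
      rw [hO, Finset.mem_image] at hi ⊢
      obtain ⟨j, hj, rfl⟩ := hi
      rw [Finset.mem_range] at hj
      rcases Nat.lt_or_ge (j+1) k with hlt | hge
      · exact ⟨j+1, Finset.mem_range.mpr hlt, Function.iterate_succ_apply' f j x⟩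
      · have hjk : j + 1 = k := by omega
        refine ⟨0, Finset.mem_range.mpr hk0, ?_⟩
        show f^[0] x = f (f^[j] x)
        rw [← Function.iterate_succ_apply' f j x]
        show f^[0] x = f^[j+1] x
        rw [hjk, hk, Function.iterate_minimalPeriod, Function.iterate_zero_apply]
    have himg : Finset.image f O = O := by
      apply Finset.eq_of_subset_of_card_le
      · intro i hi
        rw [Finset.mem_image] at hi
        obtain ⟨i', hi', rfl⟩ := hi
        exact hmapsto i' hi'
      · rw [Finset.card_image_of_injective _ e.injective]
    have hOinv : ∀ i, i ∈ O ↔ f i ∈ O := by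
      intro i
      constructor
      · exact hmapsto i
      · intro hfi
        rw [← himg, Finset.mem_image] at hfi
        obtain ⟨i', hi', heq⟩ := hfi
        rwa [← e.injective heq]
    have hOne : O.Nonempty := ⟨x, Finset.mem_image.mpr ⟨0, Finset.mem_range.mpr hk0, rfl⟩⟩
    -- split
    rw [← Finset.sum_sdiff hOβ]
    have hrest : 0 ≤ ∑ i ∈ β \ O, ((↑s + I) * ((starRingEnd ℂ) (z i) * (z i - z (e i)))).re := by
      refine IH (β \ O) (Finset.sdiff_ssubset hOβ hOne) ?_ ?_
      · exact le_trans (Finset.card_le_card (Finset.sdiff_subset)) hcard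
      · intro i
        rw [Finset.mem_sdiff, Finset.mem_sdiff, ← hinv i, ← hOinv i]
    have horb : 0 ≤ ∑ i ∈ O, ((↑s + I) * ((starRingEnd ℂ) (z i) * (z i - z (e i)))).re := by
      rw [hO, Finset.sum_image (fun a ha b hb => hinj ha hb)]
      have hsum : ∀ j ∈ Finset.range k,
          ((↑s + I) * ((starRingEnd ℂ) (z (f^[j] x)) * (z (f^[j] x) - z (e (f^[j] x))))).re
          = ((↑s + I) * ((starRingEnd ℂ) (z (f^[j] x)) * (z (f^[j] x) - z (f^[j+1] x)))).re := by
        intro j _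
        rw [Function.iterate_succ_apply']
      rw [Finset.sum_congr rfl hsum]
      have hkm : k ≤ m := le_trans (hOcard ▸ Finset.card_le_card hOβ) hcard
      exact cyclic_key k hk0 (fun j => z (f^[j] x))
        (by show z (f^[k] x) = z (f^[0] x)
            rw [hk, Function.iterate_minimalPeriod, Function.iterate_zero_apply]) s
        (trig_key m k hm hk0 hkm s hs)
    linarith

/-- For `|α| ≥ 2`, `M = E(α) − B(α,π)` and every `s ≥ cot(π/|α|)`, the Hermitian
matrix `s (M + Mᵀ) + i (M − Mᵀ)` is positive semi-definite on `ℂⁿ`;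
i.e. the asymmetry index of `E(α) − B(α,π)` is at most `cot(π/|α|)`. -/
theorem circuit_matrix_asymmetry_index (n : ℕ) (hn : 1 ≤ n)
    (α : Finset (Fin n)) (hα : 2 ≤ α.card)
    (e : Equiv.Perm (Fin n)) (he : ∀ i, i ∈ α ↔ e i ∈ α)
    (s : ℝ) (hs : Real.cot (Real.pi / α.card) ≤ s)
    (z : Fin n → ℂ) :
    0 ≤ star z ⬝ᵥ (Kmat (diagE n α - circuitMatrix n α e) s) *ᵥ z := by
  classical
  set M : Matrix (Fin n) (Fin n) ℝ := diagE n α - circuitMatrix n α e with hM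
  have hK : ∀ i j, Kmat M s i j = (↑s + I) * ((M i j : ℝ) : ℂ) + (↑s - I) * ((M j i : ℝ) : ℂ) := by
    intro i j
    simp [Kmat, Matrix.add_apply, Matrix.sub_apply, Matrix.transpose_apply,
      Matrix.map_apply, Matrix.smul_apply, smul_eq_mul]
    push_cast
    ring
  set w0 : ℂ := ∑ i : Fin n, ∑ j : Fin n, (starRingEnd ℂ) (z i) * ((M i j : ℝ) : ℂ) * z j with hw0
  have hquad : star z ⬝ᵥ (Kmat M s) *ᵥ z = (↑s + I) * w0 + (↑s - I) * (starRingEnd ℂ) w0 := by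
    have h1 : star z ⬝ᵥ (Kmat M s) *ᵥ z
        = ∑ i : Fin n, ∑ j : Fin n, (starRingEnd ℂ) (z i) * (Kmat M s i j * z j) := by
      simp [dotProduct, Matrix.mulVec, Complex.star_def, Finset.mul_sum]
    have h2 : (starRingEnd ℂ) w0
        = ∑ i : Fin n, ∑ j : Fin n, (starRingEnd ℂ) (z i) * ((M j i : ℝ) : ℂ) * z j := by
      rw [hw0, _root_.map_sum, Finset.sum_comm]
      refine Finset.sum_congr rfl fun i _ => ?_
      rw [_root_.map_sum]
      refine Finset.sum_congr rfl fun j _ => ?_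
      simp only [_root_.map_mul, Complex.conj_conj, Complex.conj_ofReal]
      ring
    rw [h1, h2, hw0]
    rw [Finset.mul_sum, Finset.mul_sum, ← Finset.sum_add_distrib]
    refine Finset.sum_congr rfl fun i _ => ?_
    rw [Finset.mul_sum, Finset.mul_sum, ← Finset.sum_add_distrib]
    refine Finset.sum_congr rfl fun j _ => ?_
    rw [hK i j]
    ring
  have hinner : ∀ i, (∑ j : Fin n, (starRingEnd ℂ) (z i) * ((M i j : ℝ) : ℂ) * z j)
      = if i ∈ α then (starRingEnd ℂ) (z i) * (z i - z (e i)) else 0 := by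
    intro i
    by_cases hiα : i ∈ α
    · have heiα : e i ∈ α := (he i).mp hiα
      rw [if_pos hiα]
      have hterm : ∀ j, (starRingEnd ℂ) (z i) * ((M i j : ℝ) : ℂ) * z j
          = (if j = i then (starRingEnd ℂ) (z i) * z i else 0)
            - (if j = e i then (starRingEnd ℂ) (z i) * z (e i) else 0) := by
        intro j
        have hMij : M i j = (if i = j ∧ i ∈ α then (1:ℝ) else 0)
            - (if i ∈ α ∧ j ∈ α ∧ j = e i then (1:ℝ) else 0) := by
          rw [hM]
          simp [diagE, circuitMatrix, Matrix.sub_apply]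
        by_cases hji : j = i <;> by_cases hje : j = e i
        · -- j = i and j = e i
          have hei : e i = i := by rw [← hje, hji]
          rw [hMij, if_pos ⟨hji.symm, hiα⟩, if_pos ⟨hiα, hje ▸ heiα, hje⟩,
            if_pos hji, if_pos hje, hei, hji]
          push_cast
          ring
        · have h2 : ¬ (i ∈ α ∧ j ∈ α ∧ j = e i) := fun h => hje h.2.2
          rw [hMij, if_pos ⟨hji.symm, hiα⟩, if_neg h2, if_pos hji, if_neg hje, hji]
          push_cast
          ring
        · have h1 : ¬ (i = j ∧ i ∈ α) := fun h => hji h.1.symm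
          rw [hMij, if_neg h1, if_pos ⟨hiα, hje ▸ heiα, hje⟩, if_neg hji, if_pos hje, hje]
          push_cast
          ring
        · have h1 : ¬ (i = j ∧ i ∈ α) := fun h => hji h.1.symm
          have h2 : ¬ (i ∈ α ∧ j ∈ α ∧ j = e i) := fun h => hje h.2.2
          rw [hMij, if_neg h1, if_neg h2, if_neg hji, if_neg hje]
          push_cast
          ring
      rw [Finset.sum_congr rfl (fun j _ => hterm j), Finset.sum_sub_distrib,
        Finset.sum_ite_eq' Finset.univ, Finset.sum_ite_eq' Finset.univ]
      simp only [Finset.mem_univ, if_true]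
      ring
    · rw [if_neg hiα]
      refine Finset.sum_eq_zero fun j _ => ?_
      have : M i j = 0 := by
        rw [hM]
        simp [diagE, circuitMatrix, Matrix.sub_apply, hiα]
      rw [this]
      simp
  have hw0α : w0 = ∑ i ∈ α, (starRingEnd ℂ) (z i) * (z i - z (e i)) := by
    rw [hw0, Finset.sum_congr rfl (fun i _ => hinner i)]
    rw [Finset.sum_ite_mem]
    congr 1
    simp
  set w : ℂ := ∑ i ∈ α, (starRingEnd ℂ) (z i) * (z i - z (e i)) with hwdef
  have hconj : (↑s - I) * (starRingEnd ℂ) w0 = (starRingEnd ℂ) ((↑s + I) * w0) := by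
    rw [_root_.map_mul]
    congr 1
    rw [_root_.map_add, Complex.conj_I, Complex.conj_ofReal]
    ring
  rw [hquad, hconj, Complex.add_conj]
  have hre : ((↑s + I) * w0).re = ∑ i ∈ α, ((↑s + I) * ((starRingEnd ℂ) (z i) * (z i - z (e i)))).re := by
    rw [hw0α, Finset.mul_sum, Complex.re_sum]
  rw [hre]
  rw [Complex.zero_le_real]
  have horb := orbit_sum n α.card e z s hα hs α (le_refl _) he
  positivity
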